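/- Let (V,⟨·,·⟩) be a real inner product space of dimension n ≥ 4 and let R be an algebraic curvature tensor on V having n-positive curvature operator of the second kind. Then the scalar curvature S of R is positive, and Ric(v,v) > S/(n(n+1)) for every unit vector v ∈ V. -/

import Mathlib

open scoped RealInnerProductSpace

variable {V : Type*} [NormedAddCommGroup V] [InnerProductSpace ℝ V]

/-- `R` is an algebraic curvature tensor: antisymmetric in the first two slots,
symmetric under exchange of the first and second pairs, and satisfying the
first Bianchi identity. -/
def IsAlgCurvatureTensor (R : V →ₗ[ℝ] V →ₗ[ℝ] V →ₗ[ℝ] V →ₗ[ℝ] ℝ) : Prop :=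
  (∀ x y z w : V, R x y z w = - R y x z w) ∧
  (∀ x y z w : V, R x y z w = R z w x y) ∧
  (∀ x y z w : V, R x y z w + R y z x w + R z x y w = 0)

/-- The Ricci curvature `Ric(x,y) = Σ_j R(x,e_j,y,e_j)` with respect to an
orthonormal basis. -/
noncomputable def ricci {n : ℕ} (b : OrthonormalBasis (Fin n) ℝ V)
    (R : V →ₗ[ℝ] V →ₗ[ℝ] V →ₗ[ℝ] V →ₗ[ℝ] ℝ) (x y : V) : ℝ :=
  ∑ j, R x (b j) y (b j)

/-- The scalar curvature `S = Σ_{i,j} R_{ijij}`. -/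
noncomputable def scalarCurv {n : ℕ} (b : OrthonormalBasis (Fin n) ℝ V)
    (R : V →ₗ[ℝ] V →ₗ[ℝ] V →ₗ[ℝ] V →ₗ[ℝ] ℝ) : ℝ :=
  ∑ i, ∑ j, R (b i) (b j) (b i) (b j)

/-- `φ` is a symmetric bilinear form which is traceless with respect to the
orthonormal basis `b`. -/
def IsTracelessSymForm {n : ℕ} (b : OrthonormalBasis (Fin n) ℝ V)
    (φ : V →ₗ[ℝ] V →ₗ[ℝ] ℝ) : Prop :=
  (∀ x y : V, φ x y = φ y x) ∧ (∑ i, φ (b i) (b i) = 0)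

/-- The inner product `⟨φ,ψ⟩ = Σ_{i,j} φ(e_i,e_j) ψ(e_i,e_j)` of bilinear forms. -/
noncomputable def formInner {n : ℕ} (b : OrthonormalBasis (Fin n) ℝ V)
    (φ ψ : V →ₗ[ℝ] V →ₗ[ℝ] ℝ) : ℝ :=
  ∑ i, ∑ j, φ (b i) (b j) * ψ (b i) (b j)

/-- The curvature operator of the second kind
`R̊(φ,ψ) = Σ_{i,j,k,l} R_{ijkl} φ(e_i,e_l) ψ(e_j,e_k)`. -/
noncomputable def secondKind {n : ℕ} (b : OrthonormalBasis (Fin n) ℝ V)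
    (R : V →ₗ[ℝ] V →ₗ[ℝ] V →ₗ[ℝ] V →ₗ[ℝ] ℝ)
    (φ ψ : V →ₗ[ℝ] V →ₗ[ℝ] ℝ) : ℝ :=
  ∑ i, ∑ j, ∑ k, ∑ l,
    R (b i) (b j) (b k) (b l) * φ (b i) (b l) * ψ (b j) (b k)

/-- `R` has `k`-nonnegative curvature operator of the second kind:
`Σ_{a=1}^k R̊(φ_a,φ_a) ≥ 0` for every orthonormal `k`-tuple of traceless
symmetric bilinear forms. -/
def kNonnegSecondKind {n : ℕ} (b : OrthonormalBasis (Fin n) ℝ V)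
    (R : V →ₗ[ℝ] V →ₗ[ℝ] V →ₗ[ℝ] V →ₗ[ℝ] ℝ) (k : ℕ) : Prop :=
  ∀ φ : Fin k → (V →ₗ[ℝ] V →ₗ[ℝ] ℝ),
    (∀ a, IsTracelessSymForm b (φ a)) →
    (∀ a a', formInner b (φ a) (φ a') = if a = a' then 1 else 0) →
    0 ≤ ∑ a, secondKind b R (φ a) (φ a)

/-- `R` has `k`-positive curvature operator of the second kind:
`Σ_{a=1}^k R̊(φ_a,φ_a) > 0` for every orthonormal `k`-tuple of traceless
symmetric bilinear forms. -/
def kPosSecondKind {n : ℕ} (b : OrthonormalBasis (Fin n) ℝ V)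
    (R : V →ₗ[ℝ] V →ₗ[ℝ] V →ₗ[ℝ] V →ₗ[ℝ] ℝ) (k : ℕ) : Prop :=
  ∀ φ : Fin k → (V →ₗ[ℝ] V →ₗ[ℝ] ℝ),
    (∀ a, IsTracelessSymForm b (φ a)) →
    (∀ a a', formInner b (φ a) (φ a') = if a = a' then 1 else 0) →
    0 < ∑ a, secondKind b R (φ a) (φ a)

/-! Let `v` be a unit vector and complete it to an orthonormal basis `v = c₀, c₁, …, cₙ₋₁`. The
forms `√(n/(n-1)) (v ⊗ v - g/n)` and `(v ⊗ cₐ + cₐ ⊗ v)/√2`, `a ≠ 0`, are `n` orthonormal traceless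
symmetric forms. `R̊` takes the values `R(v,cₐ,v,cₐ)` on the latter, which add up to `Ric(v,v)`, and
`(2n Ric(v,v) - S)/(n(n-1))` on the former, so `n`-positivity gives `S < n(n+1) Ric(v,v)`.
Summing this over an orthonormal basis gives `n S < n(n+1) S`, hence `S > 0`. -/

noncomputable def rankOneForm (u w : V) : V →ₗ[ℝ] V →ₗ[ℝ] ℝ :=
  (LinearMap.mul ℝ ℝ).compl₁₂ (innerₗ V u) (innerₗ V w)

@[simp] lemma rankOneForm_apply (u w x y : V) : rankOneForm u w x y = ⟪u, x⟫ * ⟪w, y⟫ := rfl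

noncomputable def symRankOneForm (u w : V) : V →ₗ[ℝ] V →ₗ[ℝ] ℝ :=
  rankOneForm u w + rankOneForm w u

-- `v ⊗ v - g/n`, written with `+` because `map_sub` and `sub_eq_add_neg` fail to match a
-- subtraction in `V →ₗ[ℝ] V →ₗ[ℝ] ℝ`.
noncomputable def tracelessRankOneForm (n : ℕ) (v : V) : V →ₗ[ℝ] V →ₗ[ℝ] ℝ :=
  rankOneForm v v + (-(n : ℝ)⁻¹) • innerₗ V

namespace OrthonormalBasis

variable {ι ι' : Type*} [Fintype ι] [Fintype ι']

lemma sum_inner_mul_apply (b : OrthonormalBasis ι ℝ V) (f : V →ₗ[ℝ] ℝ) (x : V) :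
    ∑ i, ⟪b i, x⟫ * f (b i) = f x := by
  conv_rhs => rw [← b.sum_repr' x]
  simp only [map_sum, map_smul, smul_eq_mul]

lemma sum_apply_self_eq (b : OrthonormalBasis ι ℝ V) (c : OrthonormalBasis ι' ℝ V)
    (B : V →ₗ[ℝ] V →ₗ[ℝ] ℝ) :
    ∑ a, B (c a) (c a) = ∑ i, B (b i) (b i) :=
  calc ∑ a, B (c a) (c a) = ∑ a, ∑ i, ⟪b i, c a⟫ * B (b i) (c a) :=
        Finset.sum_congr rfl fun a _ => (b.sum_inner_mul_apply (B.flip (c a)) (c a)).symm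
    _ = ∑ i, ∑ a, ⟪c a, b i⟫ * B (b i) (c a) := by
        rw [Finset.sum_comm]
        simp only [real_inner_comm (c _)]
    _ = ∑ i, B (b i) (b i) := Finset.sum_congr rfl fun i _ => c.sum_inner_mul_apply _ _

lemma exists_apply_eq (b : OrthonormalBasis ι ℝ V) (i₀ : ι) {v : V} (hv : ‖v‖ = 1) :
    ∃ c : OrthonormalBasis ι ℝ V, c i₀ = v := by
  have : FiniteDimensional ℝ V := b.toBasis.finiteDimensional_of_finite
  have hv' : Orthonormal ℝ (({i₀} : Set ι).domRestrict fun _ => v) :=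
    ⟨fun _ => hv, fun i j hij => absurd (Subtype.ext (i.2.trans j.2.symm)) hij⟩
  obtain ⟨c, hc⟩ := hv'.exists_orthonormalBasis_extension_of_card_eq
    (Module.finrank_eq_card_basis b.toBasis)
  exact ⟨c, hc i₀ rfl⟩

end OrthonormalBasis

namespace IsAlgCurvatureTensor

variable {R : V →ₗ[ℝ] V →ₗ[ℝ] V →ₗ[ℝ] V →ₗ[ℝ] ℝ} (hR : IsAlgCurvatureTensor R)
include hR

lemma apply_self_left (x z w : V) : R x x z w = 0 := by
  linarith [hR.1 x x z w]

lemma apply_swap_right (x y z w : V) : R x y z w = - R x y w z := by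
  rw [hR.2.1, hR.1, hR.2.1 w]

lemma apply_swap_swap (x y z w : V) : R y x w z = R x y z w := by
  rw [hR.1, hR.apply_swap_right, neg_neg]

end IsAlgCurvatureTensor

section Contractions

variable {n : ℕ} (b : OrthonormalBasis (Fin n) ℝ V)

noncomputable def formInnerₗ :
    (V →ₗ[ℝ] V →ₗ[ℝ] ℝ) →ₗ[ℝ] (V →ₗ[ℝ] V →ₗ[ℝ] ℝ) →ₗ[ℝ] ℝ :=
  LinearMap.mk₂ ℝ (formInner b)
    (fun _ _ _ => by simp only [formInner, LinearMap.add_apply, add_mul, Finset.sum_add_distrib])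
    (fun _ _ _ => by
      simp only [formInner, LinearMap.smul_apply, smul_eq_mul, Finset.mul_sum, mul_assoc])
    (fun _ _ _ => by simp only [formInner, LinearMap.add_apply, mul_add, Finset.sum_add_distrib])
    (fun _ _ _ => by
      simp only [formInner, LinearMap.smul_apply, smul_eq_mul, Finset.mul_sum, mul_left_comm])

lemma formInner_eq_formInnerₗ (φ ψ : V →ₗ[ℝ] V →ₗ[ℝ] ℝ) :
    formInner b φ ψ = formInnerₗ b φ ψ :=
  rfl

noncomputable def secondKindₗ (R : V →ₗ[ℝ] V →ₗ[ℝ] V →ₗ[ℝ] V →ₗ[ℝ] ℝ) :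
    (V →ₗ[ℝ] V →ₗ[ℝ] ℝ) →ₗ[ℝ] (V →ₗ[ℝ] V →ₗ[ℝ] ℝ) →ₗ[ℝ] ℝ :=
  LinearMap.mk₂ ℝ (secondKind b R)
    (fun _ _ _ => by
      simp only [secondKind, LinearMap.add_apply, mul_add, add_mul, Finset.sum_add_distrib])
    (fun _ _ _ => by
      simp only [secondKind, LinearMap.smul_apply, smul_eq_mul, Finset.mul_sum]
      congr! 4
      ring)
    (fun _ _ _ => by simp only [secondKind, LinearMap.add_apply, mul_add, Finset.sum_add_distrib])
    (fun _ _ _ => by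
      simp only [secondKind, LinearMap.smul_apply, smul_eq_mul, Finset.mul_sum]
      congr! 4
      ring)

lemma secondKind_eq_secondKindₗ (R : V →ₗ[ℝ] V →ₗ[ℝ] V →ₗ[ℝ] V →ₗ[ℝ] ℝ)
    (φ ψ : V →ₗ[ℝ] V →ₗ[ℝ] ℝ) : secondKind b R φ ψ = secondKindₗ b R φ ψ :=
  rfl

lemma formInner_smul_smul (r r' : ℝ) (φ ψ : V →ₗ[ℝ] V →ₗ[ℝ] ℝ) :
    formInner b (r • φ) (r' • ψ) = r * r' * formInner b φ ψ := by
  simp only [formInner_eq_formInnerₗ, map_smul, LinearMap.smul_apply, smul_eq_mul]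
  ring

lemma secondKind_smul_smul (R : V →ₗ[ℝ] V →ₗ[ℝ] V →ₗ[ℝ] V →ₗ[ℝ] ℝ) (r r' : ℝ)
    (φ ψ : V →ₗ[ℝ] V →ₗ[ℝ] ℝ) :
    secondKind b R (r • φ) (r' • ψ) = r * r' * secondKind b R φ ψ := by
  simp only [secondKind_eq_secondKindₗ, map_smul, LinearMap.smul_apply, smul_eq_mul]
  ring

lemma innerₗ_eq_sum_rankOneForm : innerₗ V = ∑ i, rankOneForm (b i) (b i) := by
  ext x y
  simp [LinearMap.sum_apply, real_inner_comm x, ← b.sum_inner_mul_inner x y]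

lemma sum_rankOneForm_apply_self (u w : V) : ∑ i, rankOneForm u w (b i) (b i) = ⟪u, w⟫ := by
  simp [← b.sum_inner_mul_inner u w, real_inner_comm w]

lemma sum_innerₗ_apply_self : ∑ i, innerₗ V (b i) (b i) = n := by
  simp [b.orthonormal.1]

lemma formInner_rankOneForm_right (φ : V →ₗ[ℝ] V →ₗ[ℝ] ℝ) (u w : V) :
    formInner b φ (rankOneForm u w) = φ u w := by
  have h : ∀ i, ∑ j, φ (b i) (b j) * rankOneForm u w (b i) (b j) = ⟪b i, u⟫ * φ (b i) w :=
    fun i => by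
      rw [← b.sum_inner_mul_apply (φ (b i)) w, Finset.mul_sum]
      congr! 1 with j
      rw [rankOneForm_apply, real_inner_comm u, real_inner_comm w]
      ring
  simp only [formInner, h]
  exact b.sum_inner_mul_apply (φ.flip w) u

lemma formInner_innerₗ_right (φ : V →ₗ[ℝ] V →ₗ[ℝ] ℝ) :
    formInner b φ (innerₗ V) = ∑ i, φ (b i) (b i) := by
  rw [formInner_eq_formInnerₗ, innerₗ_eq_sum_rankOneForm b, map_sum]
  exact Finset.sum_congr rfl fun i _ => formInner_rankOneForm_right b φ _ _

lemma formInner_symRankOneForm_right (φ : V →ₗ[ℝ] V →ₗ[ℝ] ℝ) (u w : V) :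
    formInner b φ (symRankOneForm u w) = φ u w + φ w u := by
  rw [formInner_eq_formInnerₗ, symRankOneForm, map_add]
  exact congrArg₂ (· + ·) (formInner_rankOneForm_right b φ u w)
    (formInner_rankOneForm_right b φ w u)

lemma formInner_tracelessRankOneForm_right (φ : V →ₗ[ℝ] V →ₗ[ℝ] ℝ) (v : V) :
    formInner b φ (tracelessRankOneForm n v) = φ v v - (n : ℝ)⁻¹ * ∑ i, φ (b i) (b i) := by
  rw [formInner_eq_formInnerₗ, tracelessRankOneForm, map_add, map_smul,
    ← formInner_eq_formInnerₗ, ← formInner_eq_formInnerₗ, formInner_rankOneForm_right,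
    formInner_innerₗ_right, smul_eq_mul]
  ring

lemma secondKind_rankOneForm (R : V →ₗ[ℝ] V →ₗ[ℝ] V →ₗ[ℝ] V →ₗ[ℝ] ℝ) (u w u' w' : V) :
    secondKind b R (rankOneForm u w) (rankOneForm u' w') = R u u' w' w := by
  -- expanding one argument at a time keeps the sums in the order `i, j, k, l` of `secondKind`
  conv_rhs =>
    rw [← b.sum_repr' u]
    simp only [map_sum, map_smul, LinearMap.sum_apply, LinearMap.smul_apply]
    rw [← b.sum_repr' u']
    simp only [map_sum, map_smul, LinearMap.sum_apply, LinearMap.smul_apply]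
    rw [← b.sum_repr' w']
    simp only [map_sum, map_smul, LinearMap.sum_apply, LinearMap.smul_apply]
    rw [← b.sum_repr' w]
    simp only [map_sum, map_smul, smul_eq_mul, Finset.mul_sum]
  refine Finset.sum_congr rfl fun i _ => Finset.sum_congr rfl fun j _ =>
    Finset.sum_congr rfl fun k _ => Finset.sum_congr rfl fun l _ => ?_
  simp only [rankOneForm_apply, real_inner_comm (b _)]
  ring

end Contractions

section Traceless

variable {n : ℕ} (b : OrthonormalBasis (Fin n) ℝ V)

lemma IsTracelessSymForm.smul {φ : V →ₗ[ℝ] V →ₗ[ℝ] ℝ} (h : IsTracelessSymForm b φ) (r : ℝ) :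
    IsTracelessSymForm b (r • φ) :=
  ⟨fun x y => by simp only [LinearMap.smul_apply, h.1 x y],
    by simp only [LinearMap.smul_apply, smul_eq_mul, ← Finset.mul_sum, h.2, mul_zero]⟩

lemma isTracelessSymForm_symRankOneForm {u w : V} (h : ⟪u, w⟫ = 0) :
    IsTracelessSymForm b (symRankOneForm u w) := by
  refine ⟨fun x y => ?_, ?_⟩
  · simp only [symRankOneForm, LinearMap.add_apply, rankOneForm_apply]
    ring
  · simp only [symRankOneForm, LinearMap.add_apply, Finset.sum_add_distrib,
      sum_rankOneForm_apply_self, real_inner_comm u w, h, add_zero]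

lemma isTracelessSymForm_tracelessRankOneForm (hn : n ≠ 0) {v : V} (hv : ‖v‖ = 1) :
    IsTracelessSymForm b (tracelessRankOneForm n v) := by
  refine ⟨fun x y => ?_, ?_⟩
  · simp only [tracelessRankOneForm, LinearMap.add_apply, LinearMap.smul_apply,
      rankOneForm_apply, innerₗ_apply_apply, real_inner_comm x y]
    ring
  · simp only [tracelessRankOneForm, LinearMap.add_apply, LinearMap.smul_apply, smul_eq_mul,
      Finset.sum_add_distrib, ← Finset.mul_sum, sum_rankOneForm_apply_self, sum_innerₗ_apply_self,
      real_inner_self_eq_norm_sq, hv]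
    field_simp
    ring

end Traceless

section SecondKind

variable {n : ℕ} (b : OrthonormalBasis (Fin n) ℝ V)
  {R : V →ₗ[ℝ] V →ₗ[ℝ] V →ₗ[ℝ] V →ₗ[ℝ] ℝ} (hR : IsAlgCurvatureTensor R)
include hR

lemma sum_apply_swap_eq_neg_ricci (x : V) : ∑ j, R x (b j) (b j) x = - ricci b R x x := by
  simp only [ricci, ← Finset.sum_neg_distrib]
  exact Finset.sum_congr rfl fun j _ => hR.apply_swap_right _ _ _ _

lemma sum_sum_apply_swap_eq_neg_scalarCurv :
    ∑ i, ∑ j, R (b i) (b j) (b j) (b i) = - scalarCurv b R := by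
  simp only [scalarCurv, ← Finset.sum_neg_distrib]
  exact Finset.sum_congr rfl fun i _ =>
    Finset.sum_congr rfl fun j _ => hR.apply_swap_right _ _ _ _

lemma secondKind_symRankOneForm_self (u w : V) :
    secondKind b R (symRankOneForm u w) (symRankOneForm u w) = 2 * R u w u w := by
  simp only [secondKind_eq_secondKindₗ, symRankOneForm, map_add, LinearMap.add_apply]
  simp only [← secondKind_eq_secondKindₗ, secondKind_rankOneForm, hR.apply_self_left,
    hR.apply_swap_swap u w u w]
  ring

lemma secondKind_tracelessRankOneForm_self (v : V) :
    secondKind b R (tracelessRankOneForm n v) (tracelessRankOneForm n v)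
      = 2 * (n : ℝ)⁻¹ * ricci b R v v - ((n : ℝ)⁻¹) ^ 2 * scalarCurv b R := by
  simp only [secondKind_eq_secondKindₗ, tracelessRankOneForm, map_add, map_smul,
    LinearMap.add_apply, LinearMap.smul_apply, innerₗ_eq_sum_rankOneForm b, map_sum,
    LinearMap.sum_apply]
  simp only [← secondKind_eq_secondKindₗ, secondKind_rankOneForm, hR.apply_self_left,
    smul_eq_mul, Finset.sum_add_distrib, ← Finset.mul_sum]
  have h₁ : ∑ j, R (b j) v v (b j) = - ricci b R v v := by
    rw [← sum_apply_swap_eq_neg_ricci b hR]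
    exact Finset.sum_congr rfl fun j _ => hR.apply_swap_swap _ _ _ _
  have h₂ : ∑ i, ∑ j, R (b j) (b i) (b i) (b j) = - scalarCurv b R := by
    rw [← sum_sum_apply_swap_eq_neg_scalarCurv b hR]
    exact Finset.sum_congr rfl fun i _ =>
      Finset.sum_congr rfl fun j _ => hR.apply_swap_swap _ _ _ _
  rw [h₁, h₂, sum_apply_swap_eq_neg_ricci b hR]
  ring

end SecondKind

lemma mul_self_sqrt_natCast_div_sub_one (n : ℕ) :
    √(n / (n - 1)) * √(n / (n - 1)) = (n : ℝ) / (n - 1) := by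
  refine Real.mul_self_sqrt ?_
  rcases Nat.eq_zero_or_pos n with rfl | hn
  · simp
  · exact div_nonneg n.cast_nonneg (sub_nonneg.2 (Nat.one_le_cast.2 hn))

lemma inv_sqrt_two_mul_self : (√2)⁻¹ * (√2)⁻¹ = (1 / 2 : ℝ) := by
  rw [← mul_inv, Real.mul_self_sqrt zero_le_two, one_div]

noncomputable def testForms {n : ℕ} (c : OrthonormalBasis (Fin n) ℝ V) (i₀ a : Fin n) :
    V →ₗ[ℝ] V →ₗ[ℝ] ℝ :=
  if a = i₀ then √(n / (n - 1)) • tracelessRankOneForm n (c i₀)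
  else (√2)⁻¹ • symRankOneForm (c i₀) (c a)

section TestFamily

variable {n : ℕ} (b c : OrthonormalBasis (Fin n) ℝ V) (i₀ : Fin n)

lemma testForms_self : testForms c i₀ i₀ = √(n / (n - 1)) • tracelessRankOneForm n (c i₀) :=
  if_pos rfl

lemma testForms_of_ne {a : Fin n} (ha : a ≠ i₀) :
    testForms c i₀ a = (√2)⁻¹ • symRankOneForm (c i₀) (c a) :=
  if_neg ha

lemma isTracelessSymForm_testForms (hn : n ≠ 0) (a : Fin n) :
    IsTracelessSymForm b (testForms c i₀ a) := by
  by_cases ha : a = i₀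
  · rw [ha, testForms_self]
    exact (isTracelessSymForm_tracelessRankOneForm b hn (c.orthonormal.1 i₀)).smul b _
  · rw [testForms_of_ne c i₀ ha]
    refine (isTracelessSymForm_symRankOneForm b ?_).smul b _
    simp [orthonormal_iff_ite.mp c.orthonormal, Ne.symm ha]

lemma formInner_testForms (hn : 2 ≤ n) (a a' : Fin n) :
    formInner b (testForms c i₀ a) (testForms c i₀ a') = if a = a' then 1 else 0 := by
  have horth := orthonormal_iff_ite.mp c.orthonormal
  have hn₁ : (1 : ℝ) < n := by exact_mod_cast hn
  have hn₁' : (n : ℝ) - 1 ≠ 0 := by linarith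
  have hα := mul_self_sqrt_natCast_div_sub_one n
  have hs := inv_sqrt_two_mul_self
  have htr := (isTracelessSymForm_tracelessRankOneForm b (by omega) (c.orthonormal.1 i₀)).2
  have hperp : ∀ a, a ≠ i₀ → ⟪c i₀, c a⟫ = 0 := fun a ha => by simp [horth, Ne.symm ha]
  by_cases ha : a = i₀ <;> by_cases ha' : a' = i₀
  · rw [ha, ha', testForms_self, formInner_smul_smul, formInner_tracelessRankOneForm_right, htr,
      hα]
    simp only [tracelessRankOneForm, LinearMap.add_apply, LinearMap.smul_apply,
      rankOneForm_apply, innerₗ_apply_apply, horth, if_true, smul_eq_mul]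
    field_simp
    ring
  · rw [if_neg fun h : a = a' => ha' (h ▸ ha), ha, testForms_self, testForms_of_ne c i₀ ha',
      formInner_smul_smul, formInner_symRankOneForm_right]
    simp [tracelessRankOneForm, hperp a' ha', real_inner_comm (c i₀) (c a')]
  · rw [if_neg fun h : a = a' => ha (h ▸ ha'), ha', testForms_self, testForms_of_ne c i₀ ha,
      formInner_smul_smul, formInner_tracelessRankOneForm_right,
      (isTracelessSymForm_symRankOneForm b (hperp a ha)).2]
    simp [symRankOneForm, hperp a ha, real_inner_comm (c i₀) (c a)]
  · rw [testForms_of_ne c i₀ ha, testForms_of_ne c i₀ ha', formInner_smul_smul,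
      formInner_symRankOneForm_right]
    simp only [symRankOneForm, LinearMap.add_apply, rankOneForm_apply, horth, if_true,
      Ne.symm ha', if_false]
    split_ifs <;> linarith

lemma sum_secondKind_testForms {R : V →ₗ[ℝ] V →ₗ[ℝ] V →ₗ[ℝ] V →ₗ[ℝ] ℝ}
    (hR : IsAlgCurvatureTensor R) :
    ∑ a, secondKind b R (testForms c i₀ a) (testForms c i₀ a)
      = ricci b R (c i₀) (c i₀) + n / (n - 1) *
          (2 * (n : ℝ)⁻¹ * ricci b R (c i₀) (c i₀) - ((n : ℝ)⁻¹) ^ 2 * scalarCurv b R) := by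
  have hterm : ∀ a, secondKind b R (testForms c i₀ a) (testForms c i₀ a)
      = R (c i₀) (c a) (c i₀) (c a) + if a = i₀ then n / (n - 1) *
          (2 * (n : ℝ)⁻¹ * ricci b R (c i₀) (c i₀) - ((n : ℝ)⁻¹) ^ 2 * scalarCurv b R) else 0 := by
    intro a
    by_cases ha : a = i₀
    · rw [ha, testForms_self, secondKind_smul_smul, mul_self_sqrt_natCast_div_sub_one,
        secondKind_tracelessRankOneForm_self b hR, hR.apply_self_left, if_pos rfl, zero_add]
    · rw [testForms_of_ne c i₀ ha, secondKind_smul_smul, inv_sqrt_two_mul_self,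
        secondKind_symRankOneForm_self b hR, if_neg ha]
      ring
  rw [Finset.sum_congr rfl fun a _ => hterm a, Finset.sum_add_distrib, Finset.sum_ite_eq',
    if_pos (Finset.mem_univ _)]
  congr 1
  exact b.sum_apply_self_eq c ((R (c i₀)).flip (c i₀))

end TestFamily

lemma scalarCurv_lt_mul_ricci {n : ℕ} (hn : 2 ≤ n) (b : OrthonormalBasis (Fin n) ℝ V)
    {R : V →ₗ[ℝ] V →ₗ[ℝ] V →ₗ[ℝ] V →ₗ[ℝ] ℝ} (hR : IsAlgCurvatureTensor R)
    (hpos : kPosSecondKind b R n) {v : V} (hv : ‖v‖ = 1) :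
    scalarCurv b R < n * (n + 1) * ricci b R v v := by
  obtain ⟨c, hc⟩ := b.exists_apply_eq ⟨0, by omega⟩ hv
  have h := hpos (testForms c ⟨0, by omega⟩) (isTracelessSymForm_testForms b c _ (by omega))
    (formInner_testForms b c _ hn)
  rw [sum_secondKind_testForms b c _ hR, hc] at h
  have hn₁ : (1 : ℝ) < n := by exact_mod_cast hn
  have hn₀ : (n : ℝ) ≠ 0 := by linarith
  have hn₁' : (n : ℝ) - 1 ≠ 0 := by linarith
  have hfactor : n * (n + 1) * ricci b R v v - scalarCurv b R = n * (n - 1) * (ricci b R v v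
      + n / (n - 1) * (2 * (n : ℝ)⁻¹ * ricci b R v v - ((n : ℝ)⁻¹) ^ 2 * scalarCurv b R)) := by
    field_simp
    ring
  rw [← sub_pos, hfactor]
  exact mul_pos (mul_pos (by linarith) (by linarith)) h

theorem stmt_9 {n : ℕ} (hn : 4 ≤ n)
    (b : OrthonormalBasis (Fin n) ℝ V)
    (R : V →ₗ[ℝ] V →ₗ[ℝ] V →ₗ[ℝ] V →ₗ[ℝ] ℝ)
    (hR : IsAlgCurvatureTensor R)
    (hpos : kPosSecondKind b R n) :
    0 < scalarCurv b R ∧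
      ∀ v : V, ‖v‖ = 1 →
        scalarCurv b R / ((n : ℝ) * ((n : ℝ) + 1)) < ricci b R v v := by
  have hric : ∀ v : V, ‖v‖ = 1 → scalarCurv b R < n * (n + 1) * ricci b R v v :=
    fun v hv => scalarCurv_lt_mul_ricci (by omega) b hR hpos hv
  have : NeZero n := ⟨by omega⟩
  have hS : 0 < scalarCurv b R := by
    have hlt : n * scalarCurv b R < n * (n + 1) * scalarCurv b R :=
      calc n * scalarCurv b R = ∑ _i : Fin n, scalarCurv b R := by simp
        _ < ∑ i, n * (n + 1) * ricci b R (b i) (b i) :=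
          Finset.sum_lt_sum_of_nonempty Finset.univ_nonempty
            fun i _ => hric (b i) (b.orthonormal.1 i)
        _ = n * (n + 1) * scalarCurv b R := by rw [← Finset.mul_sum]; rfl
    have : 0 < (n : ℝ) * n * scalarCurv b R := by linarith
    exact pos_of_mul_pos_right this (by positivity)
  refine ⟨hS, fun v hv => (div_lt_iff₀ (by positivity)).2 ?_⟩
  linarith [hric v hv]
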